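/- arXiv:2110.00613 — 2 statements merged into one kernel-verified Lean document; each statement's English description precedes it below -/
import Mathlib

section
/- Let x : Fin B → ℝ be a nondecreasing (sorted) sequence of B real numbers, with B ≥ 1, and let 1 ≤ n ≤ B. Then ∑_{i=1}^{B} x_{(i)} · (i^n − (i−1)^n) / B^n ≤ ∑_{i=1}^{B} x_{(i)} · (C(i,n) − C(i−1,n)) / C(B,n); that is, the string-based estimator V_n^B is pointwise at most the combination-based estimator U_n^B on any sorted sample. -/
/-!
Both estimators are expectations of `x` at the largest rank among `n` draws from `{1, …, B}`:
drawn with replacement for `V` (the rank has CDF `(k/B)^n`) and without replacement for `U`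
(CDF `C(k,n)/C(B,n)`). Since `C(k,n)/C(B,n) = ∏_{j<n} (k-j)/(B-j) ≤ (k/B)^n`, the rank under `U`
stochastically dominates the one under `V`, and summation by parts turns this into the
inequality between the expectations of the nondecreasing `x`.
-/

open Finset

theorem Nat.sub_mul_le_sub_mul_of_le {k B : ℕ} (hk : k ≤ B) (j : ℕ) :
    (k - j) * B ≤ (B - j) * k := by
  rcases le_total j k with hj | hj
  · zify [hj, hj.trans hk]
    nlinarith
  · simp [Nat.sub_eq_zero_of_le hj]

theorem Nat.descFactorial_mul_pow_le_of_le {k B : ℕ} (hk : k ≤ B) (n : ℕ) :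
    k.descFactorial n * B ^ n ≤ B.descFactorial n * k ^ n := by
  induction n with
  | zero => simp
  | succ n ih =>
    rw [Nat.descFactorial_succ, Nat.descFactorial_succ, pow_succ, pow_succ]
    calc (k - n) * k.descFactorial n * (B ^ n * B)
        = ((k - n) * B) * (k.descFactorial n * B ^ n) := by ring
      _ ≤ ((B - n) * k) * (B.descFactorial n * k ^ n) :=
        Nat.mul_le_mul (Nat.sub_mul_le_sub_mul_of_le hk n) ih
      _ = (B - n) * B.descFactorial n * (k ^ n * k) := by ring

theorem Nat.choose_mul_pow_le_of_le {k B : ℕ} (hk : k ≤ B) (n : ℕ) :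
    k.choose n * B ^ n ≤ B.choose n * k ^ n := by
  have h := Nat.descFactorial_mul_pow_le_of_le hk n
  rw [Nat.descFactorial_eq_factorial_mul_choose, Nat.descFactorial_eq_factorial_mul_choose,
    mul_assoc, mul_assoc] at h
  exact Nat.le_of_mul_le_mul_left h n.factorial_pos

section StochasticDominance

variable {R : Type*} [CommRing R] [PartialOrder R] [IsOrderedRing R] {F G : ℕ → R} {m : ℕ}

theorem Monotone.sum_range_mul_sub_le_of_le {f : ℕ → R} (hf : Monotone f) (h0 : F 0 = G 0)
    (hm : F m = G m) (hGF : ∀ k ≤ m, G k ≤ F k) :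
    ∑ i ∈ range m, f i * (F (i + 1) - F i) ≤ ∑ i ∈ range m, f i * (G (i + 1) - G i) := by
  set D : ℕ → R := fun k => F k - G k
  have hD : ∀ k, ∑ i ∈ range k, (D (i + 1) - D i) = D k := fun k => by
    rw [sum_range_sub]; simp [D, h0]
  have hdiff : ∑ i ∈ range m, f i * (G (i + 1) - G i) - ∑ i ∈ range m, f i * (F (i + 1) - F i)
      = -∑ i ∈ range m, f i • (D (i + 1) - D i) := by
    rw [← sum_sub_distrib, ← sum_neg_distrib]
    exact sum_congr rfl fun i _ => by simp only [D, smul_eq_mul]; ring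
  rw [← sub_nonneg, hdiff, sum_range_by_parts]
  simp only [hD, D, hm, sub_self, smul_eq_mul, mul_zero, zero_sub, neg_neg]
  refine sum_nonneg fun i hi => mul_nonneg (sub_nonneg.2 (hf (Nat.le_succ i))) ?_
  exact sub_nonneg.2 (hGF _ (by rw [mem_range] at hi; omega))

theorem Monotone.sum_fin_mul_sub_le_of_le {x : Fin m → R} (hx : Monotone x) (h0 : F 0 = G 0)
    (hm : F m = G m) (hGF : ∀ k ≤ m, G k ≤ F k) :
    ∑ i : Fin m, x i * (F (i + 1) - F i) ≤ ∑ i : Fin m, x i * (G (i + 1) - G i) := by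
  cases m with
  | zero => simp
  | succ m =>
    have := (hx.comp Fin.clamp_monotone).sum_range_mul_sub_le_of_le h0 hm hGF
    have hclamp (i : Fin (m + 1)) : Fin.clamp i m = i :=
      Fin.ext (by simp [Nat.le_of_lt_succ i.2])
    simpa [← Fin.sum_univ_eq_sum_range, hclamp] using this

end StochasticDominance

theorem Nat.cast_pow_pos_of_le {B n : ℕ} (hnB : n ≤ B) : (0 : ℝ) < (B : ℝ) ^ n := by
  rcases n.eq_zero_or_pos with rfl | hn
  · simp
  · exact pow_pos (by exact_mod_cast hn.trans_le hnB) n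

noncomputable def cdfMaxWithReplacement (B n k : ℕ) : ℝ := (k : ℝ) ^ n / (B : ℝ) ^ n

noncomputable def cdfMaxWithoutReplacement (B n k : ℕ) : ℝ :=
  (k.choose n : ℝ) / (B.choose n : ℝ)

theorem cdfMaxWithoutReplacement_le_cdfMaxWithReplacement {B n k : ℕ} (hnB : n ≤ B)
    (hk : k ≤ B) :
    cdfMaxWithoutReplacement B n k ≤ cdfMaxWithReplacement B n k := by
  rw [cdfMaxWithoutReplacement, cdfMaxWithReplacement,
    div_le_div_iff₀ (by exact_mod_cast Nat.choose_pos hnB) (Nat.cast_pow_pos_of_le hnB)]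
  exact_mod_cast (Nat.choose_mul_pow_le_of_le hk n).trans_eq (mul_comm _ _)

theorem cdfMaxWithReplacement_zero (B n : ℕ) :
    cdfMaxWithReplacement B n 0 = cdfMaxWithoutReplacement B n 0 := by
  cases n <;> simp [cdfMaxWithReplacement, cdfMaxWithoutReplacement]

theorem cdfMaxWithReplacement_self {B n : ℕ} (hnB : n ≤ B) : cdfMaxWithReplacement B n B = 1 :=
  div_self (Nat.cast_pow_pos_of_le hnB).ne'

theorem cdfMaxWithoutReplacement_self {B n : ℕ} (hnB : n ≤ B) :
    cdfMaxWithoutReplacement B n B = 1 :=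
  div_self (by exact_mod_cast (Nat.choose_pos hnB).ne')

theorem V_le_U_on_sorted_sample_general (B n : ℕ) (hnB : n ≤ B)
    (x : Fin B → ℝ) (hx : Monotone x) :
    (∑ i : Fin B, x i *
        ((((i.1 : ℝ) + 1) ^ n - ((i.1 : ℝ)) ^ n) / (B : ℝ) ^ n))
      ≤ ∑ i : Fin B, x i *
          ((((i.1 + 1).choose n : ℝ) - ((i.1).choose n : ℝ)) / (B.choose n : ℝ)) := by
  have hV (i : ℕ) : (((i : ℝ) + 1) ^ n - (i : ℝ) ^ n) / (B : ℝ) ^ n =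
      cdfMaxWithReplacement B n (i + 1) - cdfMaxWithReplacement B n i := by
    simp [cdfMaxWithReplacement, sub_div]
  have hU (i : ℕ) : (((i + 1).choose n : ℝ) - (i.choose n : ℝ)) / (B.choose n : ℝ) =
      cdfMaxWithoutReplacement B n (i + 1) - cdfMaxWithoutReplacement B n i :=
    sub_div _ _ _
  simp only [hV, hU]
  exact hx.sum_fin_mul_sub_le_of_le (cdfMaxWithReplacement_zero B n)
    ((cdfMaxWithReplacement_self hnB).trans (cdfMaxWithoutReplacement_self hnB).symm)
    fun k hk => cdfMaxWithoutReplacement_le_cdfMaxWithReplacement hnB hk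

/-- For a nondecreasing (sorted) sequence `x : Fin B → ℝ` with `B ≥ 1` and `1 ≤ n ≤ B`,
the string-based estimator `V_n^B` is pointwise at most the combination-based estimator
`U_n^B`.  Here the `i`-th order statistic `x_{(i)}` (for `i = 1,...,B`) is `x ⟨i-1⟩`,
`V_n^B = ∑ x_{(i)} (i^n - (i-1)^n)/B^n` and
`U_n^B = ∑ x_{(i)} (C(i,n) - C(i-1,n))/C(B,n)`. -/
theorem V_le_U_on_sorted_sample (B n : ℕ) (hB : 1 ≤ B) (hn : 1 ≤ n) (hnB : n ≤ B)
    (x : Fin B → ℝ) (hx : Monotone x) :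
    (∑ i : Fin B, x i *
        ((((i.1 : ℝ) + 1) ^ n - ((i.1 : ℝ)) ^ n) / (B : ℝ) ^ n))
      ≤ ∑ i : Fin B, x i *
          ((((i.1 + 1).choose n : ℝ) - ((i.1).choose n : ℝ)) / (B.choose n : ℝ)) :=
  V_le_U_on_sorted_sample_general B n hnB x hx
end

section
/- Let X_1, ..., X_B be integrable, independent and identically distributed real-valued random variables on a probability space, B ≥ 1, and 1 ≤ n ≤ B. For each outcome, let X_{(1)} ≤ ... ≤ X_{(B)} denote the sorted values, and define U_n^B = ∑_{i=1}^B X_{(i)} (C(i,n) − C(i−1,n))/C(B,n), where C(a,b) is the binomial coefficient with C(a,b) = 0 for a < b. Then E[U_n^B] = E[max(X_1,...,X_n)]; that is, U_n^B is an unbiased estimator of the expected maximum of n draws. -/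
/-!
For each outcome, the weight `C(i,n) - C(i-1,n)` counts the `n`-subsets of `{1, …, B}` whose
largest element is `i` (subsets of `{1, …, i}` minus subsets of `{1, …, i-1}`), so
`C(B,n) · U_n^B` is the sum, over all `n`-subsets `S`, of `max_{j ∈ S} X_(j)`. Sorting is a
permutation of the sample, and permuting the indices permutes the `n`-subsets, so this equals
the sum of `max_{j ∈ S} X_j`. By independence and identical distribution each of these `C(B,n)`
maxima has the law of `max(X_1, …, X_n)`; take expectations.
-/

open Finset MeasureTheory ProbabilityTheory

noncomputable def subsetMax {ι : Type*} (S : Finset ι) (x : ι → ℝ) : ℝ :=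
  if h : S.Nonempty then S.sup' h x else 0

section Combinatorics

variable {ι : Type*}

lemma subsetMax_of_nonempty {S : Finset ι} (h : S.Nonempty) (x : ι → ℝ) :
    subsetMax S x = S.sup' h x :=
  dif_pos h

lemma subsetMax_map {κ : Type*} (e : κ ↪ ι) (S : Finset κ) (x : ι → ℝ) :
    subsetMax (S.map e) x = subsetMax S (x ∘ e) := by
  by_cases h : S.Nonempty
  · rw [subsetMax_of_nonempty (h.map), subsetMax_of_nonempty h, sup'_map]
  · simp [subsetMax, h]

lemma sum_powersetCard_subsetMax_comp_perm [Fintype ι] (n : ℕ) (σ : Equiv.Perm ι)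
    (x : ι → ℝ) :
    ∑ S ∈ powersetCard n univ, subsetMax S (x ∘ σ) =
      ∑ S ∈ powersetCard n univ, subsetMax S x := by
  conv_rhs => rw [← map_univ_equiv σ, powersetCard_map, sum_map]
  simp [subsetMax_map]

lemma subsetMax_of_monotone [LinearOrder ι] {x : ι → ℝ} (hx : Monotone x) {S : Finset ι}
    (h : S.Nonempty) : subsetMax S x = x (S.max' h) :=
  (subsetMax_of_nonempty h x).trans (apply_sup'_eq_sup'_comp h x fun _ _ => hx.map_sup _ _).symm

lemma subsetMax_eq_sum_of_monotone [Fintype ι] [LinearOrder ι] [LocallyFiniteOrderBot ι]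
    {x : ι → ℝ} (hx : Monotone x) (S : Finset ι) :
    subsetMax S x =
      ∑ i, x i * ((if S ⊆ Iic i then 1 else 0) - (if S ⊆ Iio i then 1 else 0)) := by
  rcases S.eq_empty_or_nonempty with rfl | h
  · simp [subsetMax]
  have hind : ∀ i, ((if S ⊆ Iic i then 1 else 0) - (if S ⊆ Iio i then 1 else 0) : ℝ)
      = if S.max' h = i then 1 else 0 := by
    intro i
    have hle : S ⊆ Iic i ↔ S.max' h ≤ i := by simp [max'_le_iff, subset_iff]
    have hlt : S ⊆ Iio i ↔ S.max' h < i := by simp [max'_lt_iff, subset_iff]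
    rcases lt_trichotomy (S.max' h) i with hi | rfl | hi
    · rw [if_pos (hle.2 hi.le), if_pos (hlt.2 hi), if_neg hi.ne, sub_self]
    · rw [if_pos (hle.2 le_rfl), if_neg (hlt.not.2 (lt_irrefl _)), if_pos rfl, sub_zero]
    · rw [if_neg (hle.not.2 (not_le.2 hi)), if_neg (hlt.not.2 (not_lt.2 hi.le)),
        if_neg hi.ne', sub_zero]
  simp only [hind, mul_ite, mul_one, mul_zero, sum_ite_eq, mem_univ, if_true]
  exact subsetMax_of_monotone hx h

lemma card_powersetCard_univ_filter_subset [Fintype ι] [DecidableEq ι] (n : ℕ) (t : Finset ι) :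
    #{S ∈ powersetCard n univ | S ⊆ t} = (#t).choose n := by
  rw [← card_powersetCard]
  congr 1
  ext S
  simp [mem_powersetCard, and_comm]

lemma sum_powersetCard_subsetMax_of_monotone {B : ℕ} (n : ℕ) {x : Fin B → ℝ}
    (hx : Monotone x) :
    ∑ S ∈ powersetCard n univ, subsetMax S x =
      ∑ i : Fin B, x i * (((i.1 + 1).choose n : ℝ) - (i.1.choose n : ℝ)) := by
  simp_rw [subsetMax_eq_sum_of_monotone hx]
  rw [sum_comm]
  refine sum_congr rfl fun i _ => ?_
  rw [← mul_sum, sum_sub_distrib, sum_boole, sum_boole, card_powersetCard_univ_filter_subset,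
    card_powersetCard_univ_filter_subset, Fin.card_Iic, Fin.card_Iio]

lemma subsetMax_eq_sup'_orderEmbOfFin [LinearOrder ι] {n : ℕ} {S : Finset ι}
    (hS : #S = n) (hn : (univ : Finset (Fin n)).Nonempty) (x : ι → ℝ) :
    subsetMax S x = univ.sup' hn (x ∘ S.orderEmbOfFin hS) := by
  conv_lhs => rw [← map_orderEmbOfFin_univ S hS]
  rw [subsetMax_map]
  exact subsetMax_of_nonempty hn _

end Combinatorics

section Probability

variable {Ω ι : Type*} [MeasurableSpace Ω] {μ : Measure Ω} {X : ι → Ω → ℝ}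

lemma integrable_subsetMax (hint : ∀ i, Integrable (X i) μ) (S : Finset ι) :
    Integrable (fun ω => subsetMax S (X · ω)) μ := by
  rcases S.eq_empty_or_nonempty with rfl | h
  · simp [subsetMax]
  simp_rw [subsetMax_of_nonempty h, ← Finset.sup'_apply]
  exact sup'_induction (p := (Integrable · μ)) h X (fun _ hf _ hg => hf.sup hg) fun i _ => hint i

lemma identDistrib_comp_of_injective [IsProbabilityMeasure μ] {κ : Type*} [Fintype κ]
    (hindep : iIndepFun X μ) (hident : ∀ i j, IdentDistrib (X i) (X j) μ μ)
    {f g : κ → ι} (hf : f.Injective) (hg : g.Injective) :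
    IdentDistrib (fun ω k => X (f k) ω) (fun ω k => X (g k) ω) μ μ := by
  have hmeas : ∀ i, AEMeasurable (X i) μ := fun i => (hident i i).aemeasurable_fst
  refine ⟨aemeasurable_pi_lambda _ fun k => hmeas (f k),
    aemeasurable_pi_lambda _ fun k => hmeas (g k), ?_⟩
  rw [(iIndepFun_iff_map_fun_eq_pi_map fun k => hmeas (f k)).1 (hindep.precomp hf),
    (iIndepFun_iff_map_fun_eq_pi_map fun k => hmeas (g k)).1 (hindep.precomp hg)]
  congr 1
  funext k
  exact (hident _ _).map_eq

lemma integral_sup'_comp_eq_of_injective [IsProbabilityMeasure μ] {κ : Type*} [Fintype κ]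
    (hindep : iIndepFun X μ) (hident : ∀ i j, IdentDistrib (X i) (X j) μ μ)
    {f g : κ → ι} (hf : f.Injective) (hg : g.Injective) (hκ : (univ : Finset κ).Nonempty) :
    ∫ ω, univ.sup' hκ (fun k => X (f k) ω) ∂μ =
      ∫ ω, univ.sup' hκ (fun k => X (g k) ω) ∂μ := by
  have hsup : Measurable fun v : κ → ℝ => univ.sup' hκ v := by fun_prop
  exact ((identDistrib_comp_of_injective hindep hident hf hg).comp hsup).integral_eq

end Probability

theorem U_is_unbiased_general {Ω : Type*} [MeasurableSpace Ω]
    (μ : MeasureTheory.Measure Ω) [IsProbabilityMeasure μ]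
    {B n : ℕ} (hn : 1 ≤ n) (hnB : n ≤ B)
    (X : Fin B → Ω → ℝ)
    (hint : ∀ i, Integrable (X i) μ)
    (hindep : iIndepFun X μ)
    (hident : ∀ i j, IdentDistrib (X i) (X j) μ μ)
    (Y : Fin B → Ω → ℝ)
    (hsorted : ∀ ω, Monotone fun i => Y i ω)
    (hperm : ∀ ω, ∃ σ : Equiv.Perm (Fin B), ∀ i, Y i ω = X (σ i) ω) :
    (∫ ω, ∑ i : Fin B, Y i ω *
        ((((i.1 + 1).choose n : ℝ) - ((i.1).choose n : ℝ)) / (B.choose n : ℝ)) ∂μ)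
      = ∫ ω, Finset.univ.sup'
          (Finset.univ_nonempty_iff.mpr (Fin.pos_iff_nonempty.mp hn))
          (fun i : Fin n => X (Fin.castLE hnB i) ω) ∂μ := by
  set P := powersetCard n (univ : Finset (Fin B))
  have hne : (univ : Finset (Fin n)).Nonempty := univ_nonempty_iff.mpr (Fin.pos_iff_nonempty.mp hn)
  have hC : (B.choose n : ℝ) ≠ 0 := Nat.cast_ne_zero.2 (Nat.choose_pos hnB).ne'
  have hU : ∀ ω, ∑ i : Fin B, Y i ω *
      ((((i.1 + 1).choose n : ℝ) - ((i.1).choose n : ℝ)) / (B.choose n : ℝ))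
        = (B.choose n : ℝ)⁻¹ * ∑ S ∈ P, subsetMax S (X · ω) := by
    intro ω
    obtain ⟨σ, hσ⟩ := hperm ω
    have hYX : (X · ω) ∘ σ = (Y · ω) := funext fun i => (hσ i).symm
    rw [← sum_powersetCard_subsetMax_comp_perm n σ, hYX,
      sum_powersetCard_subsetMax_of_monotone n (hsorted ω), mul_sum]
    simp only [mul_div_assoc', inv_mul_eq_div]
  have hterm : ∀ S ∈ P, ∫ ω, subsetMax S (X · ω) ∂μ =
      ∫ ω, univ.sup' hne (fun i => X (Fin.castLE hnB i) ω) ∂μ := by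
    intro S hS
    simp_rw [subsetMax_eq_sup'_orderEmbOfFin (mem_powersetCard.1 hS).2 hne]
    exact integral_sup'_comp_eq_of_injective hindep hident (RelEmbedding.injective _)
      (Fin.castLE_injective hnB) _
  rw [integral_congr_ae (ae_of_all _ hU), integral_const_mul,
    integral_finsetSum P fun S _ => integrable_subsetMax hint S, sum_congr rfl hterm, sum_const,
    card_powersetCard, card_univ, Fintype.card_fin, nsmul_eq_mul, inv_mul_cancel_left₀ hC]

/-- Let `X 0, ..., X (B-1)` be integrable, i.i.d. real random variables on a probability
space, `B ≥ 1`, `1 ≤ n ≤ B`, and let `Y` give, for each outcome, the sorted values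
(order statistics) of the `X i`.  With
`U_n^B = ∑_{i=1}^B X_{(i)} (C(i,n) - C(i-1,n))/C(B,n)`, we have
`E[U_n^B] = E[max(X_1,...,X_n)]`: `U_n^B` is an unbiased estimator of the expected
maximum of `n` draws. -/
theorem U_is_unbiased {Ω : Type*} [MeasurableSpace Ω]
    (μ : MeasureTheory.Measure Ω) [IsProbabilityMeasure μ]
    {B n : ℕ} (hB : 1 ≤ B) (hn : 1 ≤ n) (hnB : n ≤ B)
    (X : Fin B → Ω → ℝ)
    (hmeas : ∀ i, Measurable (X i))
    (hint : ∀ i, Integrable (X i) μ)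
    (hindep : iIndepFun X μ)
    (hident : ∀ i j, IdentDistrib (X i) (X j) μ μ)
    (Y : Fin B → Ω → ℝ)
    (hsorted : ∀ ω, Monotone fun i => Y i ω)
    (hperm : ∀ ω, ∃ σ : Equiv.Perm (Fin B), ∀ i, Y i ω = X (σ i) ω) :
    (∫ ω, ∑ i : Fin B, Y i ω *
        ((((i.1 + 1).choose n : ℝ) - ((i.1).choose n : ℝ)) / (B.choose n : ℝ)) ∂μ)
      = ∫ ω, Finset.univ.sup'
          (Finset.univ_nonempty_iff.mpr (Fin.pos_iff_nonempty.mp hn))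
          (fun i : Fin n => X (Fin.castLE hnB i) ω) ∂μ :=
  U_is_unbiased_general μ hn hnB X hint hindep hident Y hsorted hperm
end
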